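/- arXiv:1603.06902 — 4 statements merged into one kernel-verified Lean document; each statement's English description precedes it below -/
import Mathlib

section
/- Let G be the free product of m copies of Z₂, i.e. G = F(g₁,...,g_m)/(g_i² = 1). Then the commutator subgroup G' is a free group of rank (m−2)·2^{m−1} + 1. -/
/-!
Write `W` for the free product of `n + 1` copies of `C₂` with generators `s₀, …, sₙ`. The
elements `xⱼ = sⱼ₊₁ s₀` freely generate an index-two subgroup, so `W ≅ Fₙ ⋊ C₂` with `s₀`
inverting every `xⱼ`. The commutator subgroup is the kernel of `W → C₂ⁿ⁺¹`, and under this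
isomorphism it becomes the kernel of the mod-two abelianization `Fₙ → C₂ⁿ`. That kernel is reached
through `n` successive index-two kernels, and by Reidemeister–Schreier with transversal `{1, a}`
the kernel of a surjection `Fₖ → C₂` is free of rank `2k - 1`. Iterating, the rank is
`2ⁿ (n - 1) + 1`.
-/

open Multiplicative

local notation "C₂" => Multiplicative (ZMod 2)

lemma ZMod2.eq_one_or_eq_ofAdd_one (x : C₂) : x = 1 ∨ x = ofAdd 1 := by
  revert x; decide

@[simp] lemma ZMod2.mul_self (x : C₂) : x * x = 1 := by
  revert x; decide

@[simp] lemma ZMod2.inv_eq_self (x : C₂) : x⁻¹ = x := by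
  revert x; decide

lemma ZMod2.hom_ext {T : Type*} [Monoid T] {f g : C₂ →* T} (h : f (ofAdd 1) = g (ofAdd 1)) :
    f = g := by
  refine MonoidHom.ext fun x => ?_
  rcases ZMod2.eq_one_or_eq_ofAdd_one x with rfl | rfl
  · simp only [map_one]
  · exact h

def zmodLift {n : ℕ} [NeZero n] {T : Type*} [Monoid T] (t : T) (ht : t ^ n = 1) :
    Multiplicative (ZMod n) →* T where
  toFun x := t ^ (toAdd x).val
  map_one' := by simp
  map_mul' x y := by
    rw [toAdd_mul, ZMod.val_add, ← pow_eq_pow_mod _ ht, pow_add]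

@[simp] lemma zmodLift_ofAdd_one {T : Type*} [Monoid T] (t : T) (ht : t ^ 2 = 1) :
    zmodLift t ht (ofAdd 1 : C₂) = t :=
  pow_one t

namespace RegularWreathProduct

variable {D₁ D₂ G Q : Type*} [Group D₁] [Group D₂] [Group G] [Group Q]

def mapLeft (f : D₁ →* D₂) : D₁ ≀ᵣ Q →* D₂ ≀ᵣ Q where
  toFun x := ⟨f ∘ x.left, x.right⟩
  map_one' := by ext <;> simp
  map_mul' x y := by ext <;> simp

@[simp] lemma mapLeft_left (f : D₁ →* D₂) (x : D₁ ≀ᵣ Q) (q : Q) :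
    (mapLeft f x).left q = f (x.left q) := rfl

@[simp] lemma mapLeft_right (f : D₁ →* D₂) (x : D₁ ≀ᵣ Q) : (mapLeft f x).right = x.right := rfl

def kaloujnineKrasner (φ : G →* Q) (τ : Q → G) : G →* G ≀ᵣ Q where
  toFun w := ⟨fun x => τ x * w * (τ ((φ w)⁻¹ * x))⁻¹, φ w⟩
  map_one' := by ext <;> simp
  map_mul' w₁ w₂ := by ext <;> simp [mul_assoc]

@[simp] lemma kaloujnineKrasner_left (φ : G →* Q) (τ : Q → G) (w : G) (x : Q) :
    (kaloujnineKrasner φ τ w).left x = τ x * w * (τ ((φ w)⁻¹ * x))⁻¹ := rfl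

@[simp] lemma kaloujnineKrasner_right (φ : G →* Q) (τ : Q → G) (w : G) :
    (kaloujnineKrasner φ τ w).right = φ w := rfl

end RegularWreathProduct

namespace FreeGroup.IndexTwo

open RegularWreathProduct

variable {α : Type*} (φ : FreeGroup α →* C₂) (a : α)

def cosetRep (x : C₂) : FreeGroup α := of a ^ (toAdd x).val

@[simp] lemma cosetRep_one : cosetRep a 1 = 1 := rfl

@[simp] lemma cosetRep_ofAdd_one : cosetRep a (ofAdd 1) = of a := pow_one _

variable {φ a} in
lemma map_cosetRep (ha : φ (of a) = ofAdd 1) (x : C₂) : φ (cosetRep a x) = x := by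
  rcases ZMod2.eq_one_or_eq_ofAdd_one x with rfl | rfl <;> simp [ha]

variable {φ} in
lemma exists_map_of_eq_ofAdd_one (hφ : Function.Surjective φ) :
    ∃ a, φ (of a) = ofAdd 1 := by
  by_contra! h
  have : φ = 1 :=
    FreeGroup.ext_hom _ _ fun g => (ZMod2.eq_one_or_eq_ofAdd_one _).resolve_right (h g)
  obtain ⟨w, hw⟩ := hφ (ofAdd 1)
  rw [this, MonoidHom.one_apply] at hw
  exact absurd hw (by decide)

-- `(1, a)` is left out because its Schreier generator `a * a⁻¹` is trivial.
abbrev SchreierBasis : Type _ := {p : C₂ × α // p ≠ (1, a)}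

def schreierEval : FreeGroup (SchreierBasis a) →* FreeGroup α :=
  FreeGroup.lift fun b => (kaloujnineKrasner φ (cosetRep a) (of b.1.2)).left b.1.1

variable {φ a} in
lemma map_schreierEval (ha : φ (of a) = ofAdd 1) (b : FreeGroup (SchreierBasis a)) :
    φ (schreierEval φ a b) = 1 := by
  induction b using FreeGroup.induction_on with
  | C1 => simp
  | of b => simp [schreierEval, map_cosetRep ha, mul_comm]
  | inv_of b ih => simp_all
  | mul x y hx hy => simp_all

variable [DecidableEq α]

def schreierGen (p : C₂ × α) : FreeGroup (SchreierBasis a) :=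
  if h : p = (1, a) then 1 else of ⟨p, h⟩

variable {a} in
lemma schreierGen_of_ne {p : C₂ × α} (h : p ≠ (1, a)) : schreierGen a p = of ⟨p, h⟩ := dif_neg h

-- The Reidemeister–Schreier rewriting process.
def rewrite : FreeGroup α →* FreeGroup (SchreierBasis a) ≀ᵣ C₂ :=
  FreeGroup.lift fun g => ⟨fun x => schreierGen a (x, g), φ (of g)⟩

@[simp] lemma rewrite_of_left (g : α) (x : C₂) :
    (rewrite φ a (of g)).left x = schreierGen a (x, g) := by
  simp [rewrite]

@[simp] lemma rewrite_right (w : FreeGroup α) : (rewrite φ a w).right = φ w := by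
  change rightHom (rewrite φ a w) = φ w
  rw [← MonoidHom.comp_apply]
  congr 1
  exact FreeGroup.ext_hom _ _ fun g => by simp [rewrite]

variable {φ a}

lemma schreierEval_schreierGen (ha : φ (of a) = ofAdd 1) (p : C₂ × α) :
    schreierEval φ a (schreierGen a p) = (kaloujnineKrasner φ (cosetRep a) (of p.2)).left p.1 := by
  by_cases h : p = (1, a)
  · subst h
    simp [schreierGen, ha]
  · simp [schreierGen, h, schreierEval]

lemma mapLeft_comp_rewrite (ha : φ (of a) = ofAdd 1) :
    (mapLeft (schreierEval φ a)).comp (rewrite φ a) = kaloujnineKrasner φ (cosetRep a) :=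
  FreeGroup.ext_hom _ _ fun g => by
    ext x
    · simp [rewrite, schreierEval_schreierGen ha]
    · simp [rewrite]

variable (φ a) in
def rewriteKer : φ.ker →* FreeGroup (SchreierBasis a) where
  toFun w := (rewrite φ a w).left 1
  map_one' := by simp
  map_mul' x y := by simp [MonoidHom.mem_ker.mp x.2]

lemma schreierEval_rewriteKer (ha : φ (of a) = ofAdd 1) (w : φ.ker) :
    schreierEval φ a (rewriteKer φ a w) = w := by
  have := congrArg (fun f => (f w).left 1) (mapLeft_comp_rewrite ha)
  simpa [rewriteKer, MonoidHom.mem_ker.mp w.2] using this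

def schreierEvalKer (ha : φ (of a) = ofAdd 1) : FreeGroup (SchreierBasis a) →* φ.ker :=
  (schreierEval φ a).codRestrict φ.ker (map_schreierEval ha)

lemma rewrite_cosetRep_left_one (x : C₂) :
    (rewrite φ a (cosetRep a x)).left 1 = 1 := by
  rcases ZMod2.eq_one_or_eq_ofAdd_one x with rfl | rfl <;> simp [schreierGen]

lemma rewriteKer_schreierEvalKer_of (ha : φ (of a) = ofAdd 1) (b : SchreierBasis a) :
    rewriteKer φ a (schreierEvalKer ha (of b)) = of b := by
  obtain ⟨⟨x, g⟩, hb⟩ := b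
  -- Rewriting a coset representative produces no letters, so only the letter of `g` survives.
  change (rewrite φ a (schreierEval φ a (of _))).left 1 = _
  simp [schreierEval, map_cosetRep ha, rewrite_cosetRep_left_one, schreierGen_of_ne hb]

def kerEquiv (ha : φ (of a) = ofAdd 1) : φ.ker ≃* FreeGroup (SchreierBasis a) :=
  (rewriteKer φ a).toMulEquiv (schreierEvalKer ha)
    (MonoidHom.ext fun w => Subtype.ext (schreierEval_rewriteKer ha w))
    (FreeGroup.ext_hom _ _ (rewriteKer_schreierEvalKer_of ha))

variable (a) in
lemma card_schreierBasis [Fintype α] : Fintype.card (SchreierBasis a) = 2 * Fintype.card α - 1 := by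
  simp [Fintype.card_subtype_compl, Fintype.card_prod]

end FreeGroup.IndexTwo

def MonoidHom.kerEquivOfLE {G H M N : Type*} [Group G] [Group H] [Group M] [Group N]
    (f : G →* M) {K : Subgroup G} (hK : f.ker ≤ K) (e : K ≃* H) (g : H →* N)
    (hg : ∀ x : K, g (e x) = 1 ↔ f x = 1) : f.ker ≃* g.ker :=
  (Subgroup.subgroupOfEquivOfLe hK).symm.trans <|
    (e.subgroupMap _).trans <| MulEquiv.subgroupCongr <| by
      ext y
      simpa [Subgroup.map_equiv_eq_comap_symm, Subgroup.mem_subgroupOf] using (hg (e.symm y)).symm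

def Fin.tailHom (d : ℕ) (M : Type*) [Monoid M] : (Fin (d + 1) → M) →* (Fin d → M) :=
  MonoidHom.pi fun i => Pi.evalMonoidHom _ i.succ

@[simp] lemma Fin.tailHom_apply {d : ℕ} {M : Type*} [Monoid M] (v : Fin (d + 1) → M) :
    Fin.tailHom d M v = Fin.tail v := rfl

lemma Fin.tailHom_eq_one_iff {d : ℕ} {M : Type*} [Monoid M] {v : Fin (d + 1) → M} (h : v 0 = 1) :
    Fin.tailHom d M v = 1 ↔ v = 1 := by
  refine ⟨fun ht => funext fun i => Fin.cases h (fun j => congrFun ht j) i, fun hv => ?_⟩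
  rw [hv, map_one]

namespace FreeGroup

theorem exists_ker_mulEquiv_of_surjective {α : Type*} [Fintype α] (d : ℕ)
    (ψ : FreeGroup α →* (Fin d → C₂)) (hψ : Function.Surjective ψ) :
    ∃ N : ℕ, (N : ℤ) = 2 ^ d * (Fintype.card α - 1) + 1 ∧
      Nonempty (ψ.ker ≃* FreeGroup (Fin N)) := by
  induction d generalizing α with
  | zero =>
    have hker : ψ.ker = ⊤ := eq_top_iff.mpr fun x _ => Subsingleton.elim _ _
    exact ⟨Fintype.card α, by simp, ⟨(MulEquiv.subgroupCongr hker).trans <|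
      Subgroup.topEquiv.trans (freeGroupCongr (Fintype.equivFin α))⟩⟩
  | succ d ih =>
    classical
    set φ := (Pi.evalMonoidHom _ 0).comp ψ
    obtain ⟨a, ha⟩ := IndexTwo.exists_map_of_eq_ofAdd_one (φ := φ)
      ((Function.surjective_eval 0).comp hψ)
    set e := IndexTwo.kerEquiv ha
    set ψ₁ := (Fin.tailHom d C₂).comp (ψ.comp (φ.ker.subtype.comp e.symm.toMonoidHom))
    have hψ₁ : Function.Surjective ψ₁ := by
      intro w
      obtain ⟨x, hx⟩ := hψ (Fin.cons 1 w)
      have hxφ : x ∈ φ.ker := by simp [φ, hx]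
      exact ⟨e ⟨x, hxφ⟩, by simp [ψ₁, hx]⟩
    have hle : ψ.ker ≤ φ.ker := fun x hx => by simp [φ, MonoidHom.mem_ker.mp hx]
    have hg (x : φ.ker) : ψ₁ (e x) = 1 ↔ ψ x = 1 := by
      simpa [ψ₁] using Fin.tailHom_eq_one_iff (v := ψ x) (MonoidHom.mem_ker.mp x.2)
    obtain ⟨N, hN, ⟨e₁⟩⟩ := ih ψ₁ hψ₁
    refine ⟨N, ?_, ⟨(ψ.kerEquivOfLE hle e ψ₁ hg).trans e₁⟩⟩
    have hα : 1 ≤ Fintype.card α := Fintype.card_pos_iff.mpr ⟨a⟩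
    rw [hN, IndexTwo.card_schreierBasis, Nat.cast_sub (by omega)]
    push_cast
    ring

end FreeGroup

namespace Monoid.CoprodI

variable {ι : Type*} [DecidableEq ι] {M : ι → Type*} [∀ i, CommGroup (M i)]

def toPi : CoprodI M →* ∀ i, M i := lift (MonoidHom.mulSingle M)

@[simp] lemma toPi_of {i : ι} (x : M i) : toPi (of x) = Pi.mulSingle i x := lift_of _ _

lemma commutator_eq_ker_toPi [Fintype ι] :
    commutator (CoprodI M) = (toPi : CoprodI M →* ∀ i, M i).ker := by
  refine le_antisymm (Abelianization.commutator_subset_ker _) fun x hx => ?_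
  let σ : (∀ i, M i) →* Abelianization (CoprodI M) :=
    MonoidHom.noncommPiCoprod (fun i => Abelianization.of.comp of) fun _ _ _ _ _ => Commute.all _ _
  have hσ : σ.comp toPi = Abelianization.of :=
    ext_hom _ _ fun i => MonoidHom.ext fun y => by
      rw [MonoidHom.comp_apply, MonoidHom.comp_apply, toPi_of]
      exact MonoidHom.noncommPiCoprod_mulSingle _ i y
  rw [← Abelianization.ker_of, MonoidHom.mem_ker, ← hσ, MonoidHom.comp_apply,
    MonoidHom.mem_ker.mp hx, map_one]

end Monoid.CoprodI

lemma SemidirectProduct.ker_eq_map_ker_comp_inl {N G A : Type*} [Group N] [Group G] [Group A]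
    {φ : G →* MulAut N} (f : N ⋊[φ] G →* A) (h : f.ker ≤ rightHom.ker) :
    f.ker = (f.comp inl).ker.map inl := by
  rw [← MonoidHom.comap_ker, Subgroup.map_comap_eq, range_inl_eq_ker_rightHom, inf_eq_right.mpr h]

def Fintype.prodHom (ι M : Type*) [Fintype ι] [CommMonoid M] : (ι → M) →* M where
  toFun v := ∏ i, v i
  map_one' := Finset.prod_const_one
  map_mul' _ _ := Finset.prod_mul_distrib

namespace FreeGroup

variable (α : Type*)

def invGens : FreeGroup α →* FreeGroup α := FreeGroup.lift fun x => (of x)⁻¹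

lemma invGens_comp_self : (invGens α).comp (invGens α) = MonoidHom.id _ := by
  ext x; simp [invGens]

def invAut : MulAut (FreeGroup α) :=
  (invGens α).toMulEquiv (invGens α) (invGens_comp_self α) (invGens_comp_self α)

@[simp] lemma invAut_of (x : α) : invAut α (of x) = (of x)⁻¹ :=
  lift_apply_of (f := fun x => (of x)⁻¹)

lemma invAut_sq : invAut α ^ 2 = 1 :=
  MulEquiv.ext (DFunLike.congr_fun (invGens_comp_self α) ·)

def invAction : C₂ →* MulAut (FreeGroup α) := zmodLift (invAut α) (invAut_sq α)

@[simp] lemma invAction_ofAdd_one : invAction α (ofAdd 1) = invAut α := zmodLift_ofAdd_one _ _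

abbrev InvSemidirect := FreeGroup α ⋊[invAction α] C₂

variable [DecidableEq α]

def modTwo : FreeGroup α →* (α → C₂) := FreeGroup.lift fun j => Pi.mulSingle j (ofAdd 1)

lemma modTwo_surjective [Fintype α] : Function.Surjective (modTwo α) := by
  intro v
  rw [← MonoidHom.mem_range, ← Finset.univ_prod_mulSingle v]
  refine Subgroup.prod_mem _ fun j _ => ?_
  rcases ZMod2.eq_one_or_eq_ofAdd_one (v j) with h | h
  · rw [h, Pi.mulSingle_one]
    exact one_mem _
  · exact ⟨of j, by rw [h, modTwo, lift_apply_of]⟩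

end FreeGroup

abbrev UniversalCoxeterGroup (n : ℕ) := Monoid.CoprodI fun _ : Fin n => C₂

namespace UniversalCoxeterGroup

open SemidirectProduct Monoid FreeGroup

variable {n : ℕ}

def refl (i : Fin n) : UniversalCoxeterGroup n := CoprodI.of (i := i) (ofAdd 1)

@[simp] lemma refl_mul_self (i : Fin n) : refl i * refl i = 1 := by
  rw [refl, ← _root_.map_mul, ZMod2.mul_self, _root_.map_one]

@[simp] lemma refl_inv (i : Fin n) : (refl i)⁻¹ = refl i :=
  inv_eq_of_mul_eq_one_right (refl_mul_self i)

def toSemidirectGen (i : Fin (n + 1)) : InvSemidirect (Fin n) :=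
  Fin.cases (inr (ofAdd 1)) (fun j => inl (of j) * inr (ofAdd 1)) i

lemma toSemidirectGen_sq (i : Fin (n + 1)) : toSemidirectGen i ^ 2 = 1 := by
  rw [pow_two]
  refine Fin.cases ?_ (fun j => ?_) i
  · rw [toSemidirectGen, Fin.cases_zero, ← _root_.map_mul, ZMod2.mul_self, _root_.map_one]
  · simp only [toSemidirectGen, Fin.cases_succ]
    ext <;> simp

def toSemidirect : UniversalCoxeterGroup (n + 1) →* InvSemidirect (Fin n) :=
  CoprodI.lift fun i => zmodLift (toSemidirectGen i) (toSemidirectGen_sq i)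

@[simp] lemma toSemidirect_refl (i : Fin (n + 1)) : toSemidirect (refl i) = toSemidirectGen i := by
  simp [toSemidirect, refl]

def ofSemidirect : InvSemidirect (Fin n) →* UniversalCoxeterGroup (n + 1) :=
  SemidirectProduct.lift (FreeGroup.lift fun j => refl j.succ * refl 0)
    (zmodLift (refl 0) (by rw [pow_two, refl_mul_self])) fun q => by
      rcases ZMod2.eq_one_or_eq_ofAdd_one q with rfl | rfl
      · ext; simp
      · ext j
        simp [mul_assoc]

lemma ofSemidirect_comp_toSemidirect :
    ofSemidirect.comp toSemidirect = MonoidHom.id (UniversalCoxeterGroup (n + 1)) := by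
  refine CoprodI.ext_hom _ _ fun i => ZMod2.hom_ext ?_
  change ofSemidirect (toSemidirect (refl i)) = refl i
  refine Fin.cases ?_ (fun j => ?_) i <;> simp [toSemidirectGen, ofSemidirect, mul_assoc]

lemma toSemidirect_comp_ofSemidirect :
    toSemidirect.comp ofSemidirect = MonoidHom.id (InvSemidirect (Fin n)) := by
  refine SemidirectProduct.hom_ext (FreeGroup.ext_hom _ _ fun j => ?_) (ZMod2.hom_ext ?_)
  · change toSemidirect (ofSemidirect (inl (of j))) = inl (of j)
    rw [ofSemidirect, lift_inl, FreeGroup.lift_apply_of, _root_.map_mul, toSemidirect_refl,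
      toSemidirect_refl, toSemidirectGen, toSemidirectGen, Fin.cases_succ, Fin.cases_zero,
      mul_assoc, ← _root_.map_mul, ZMod2.mul_self, _root_.map_one, mul_one]
  · simp [ofSemidirect, toSemidirectGen]

def equivSemidirect : UniversalCoxeterGroup (n + 1) ≃* InvSemidirect (Fin n) :=
  toSemidirect.toMulEquiv ofSemidirect ofSemidirect_comp_toSemidirect
    toSemidirect_comp_ofSemidirect

def toPiSemidirect : InvSemidirect (Fin n) →* (Fin (n + 1) → C₂) :=
  CoprodI.toPi.comp equivSemidirect.symm.toMonoidHom

lemma toPiSemidirect_inl_of (j : Fin n) :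
    toPiSemidirect (inl (of j)) =
      Pi.mulSingle j.succ (ofAdd 1 : C₂) * Pi.mulSingle 0 (ofAdd 1 : C₂) := by
  simp [toPiSemidirect, equivSemidirect, ofSemidirect, refl]

lemma toPiSemidirect_inr :
    toPiSemidirect (inr (ofAdd 1) : InvSemidirect (Fin n)) = Pi.mulSingle 0 (ofAdd 1 : C₂) := by
  simp [toPiSemidirect, equivSemidirect, ofSemidirect, refl]

lemma prodHom_comp_toPiSemidirect :
    (Fintype.prodHom _ C₂).comp toPiSemidirect = (rightHom : InvSemidirect (Fin n) →* C₂) := by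
  refine SemidirectProduct.hom_ext (FreeGroup.ext_hom _ _ fun j => ?_) (ZMod2.hom_ext ?_)
  · simp [toPiSemidirect_inl_of, Fintype.prodHom, Finset.prod_mul_distrib]
  · simp [toPiSemidirect_inr, Fintype.prodHom]

def prependProd : (Fin n → C₂) →* (Fin (n + 1) → C₂) :=
  MonoidHom.pi fun i => Fin.cases (Fintype.prodHom _ C₂) (Pi.evalMonoidHom _) i

lemma prependProd_injective : Function.Injective (prependProd : (Fin n → C₂) →* _) :=
  fun v w h => funext fun j => by simpa [prependProd] using congrFun h j.succ

lemma toPiSemidirect_comp_inl :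
    toPiSemidirect.comp inl = prependProd.comp (modTwo (Fin n)) := by
  refine FreeGroup.ext_hom _ _ fun j => funext fun i => ?_
  refine Fin.cases ?_ (fun i => ?_) i
  · simp [toPiSemidirect_inl_of, prependProd, modTwo, Fintype.prodHom]
  · simp [toPiSemidirect_inl_of, prependProd, modTwo, Pi.mulSingle_apply]

lemma map_ker_toPi :
    CoprodI.toPi.ker.map
        (equivSemidirect (n := n) : UniversalCoxeterGroup (n + 1) →* InvSemidirect (Fin n)) =
      (modTwo (Fin n)).ker.map inl := by
  rw [Subgroup.map_equiv_eq_comap_symm, MonoidHom.comap_ker]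
  change toPiSemidirect.ker = _
  rw [ker_eq_map_ker_comp_inl _ ?_, toPiSemidirect_comp_inl,
    MonoidHom.ker_comp_of_injective _ _ prependProd_injective]
  intro x hx
  rw [MonoidHom.mem_ker, ← prodHom_comp_toPiSemidirect, MonoidHom.comp_apply, hx, _root_.map_one]

noncomputable def commutatorEquivKerModTwo :
    commutator (UniversalCoxeterGroup (n + 1)) ≃* (modTwo (Fin n)).ker :=
  (MulEquiv.subgroupCongr CoprodI.commutator_eq_ker_toPi).trans <|
    (equivSemidirect.subgroupMap _).trans <|
      (MulEquiv.subgroupCongr map_ker_toPi).trans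
        (Subgroup.equivMapOfInjective _ inl inl_injective).symm

end UniversalCoxeterGroup

/-- The commutator subgroup of the free product of `m ≥ 1` copies of `Z₂` is a free
group of rank `(m-2)·2^(m-1) + 1`. -/
theorem commutator_free_product_Z2 (m : ℕ) (hm : 1 ≤ m) :
    ∃ N : ℕ, (N : ℤ) = (m - 2) * 2 ^ (m - 1) + 1 ∧
      Nonempty
        ((commutator (Monoid.CoprodI (fun _ : Fin m => Multiplicative (ZMod 2)))) ≃*
          FreeGroup (Fin N)) := by
  obtain ⟨n, rfl⟩ : ∃ n, m = n + 1 := ⟨m - 1, by omega⟩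
  obtain ⟨N, hN, ⟨e⟩⟩ :=
    FreeGroup.exists_ker_mulEquiv_of_surjective n _ (FreeGroup.modTwo_surjective (Fin n))
  refine ⟨N, ?_, ⟨UniversalCoxeterGroup.commutatorEquivKerModTwo.trans e⟩⟩
  rw [hN, Fintype.card_fin, Nat.add_sub_cancel]
  push_cast
  ring
end

section
/- A finitely generated free group cannot be generated by fewer elements than its rank; consequently, any generating set of a free group of rank N consisting of exactly N elements is a free basis. -/
/-!
The lower bound is linear algebra: a generating set of `FreeGroup α` maps onto a spanning set of
the abelianization `FreeAbelianGroup α ≅ ℤ^α`, whose rank is `#α`.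

For the second part, `N` generators give a surjective endomorphism of `FreeGroup (Fin N)`, and
finitely generated residually finite groups are Hopfian: precomposition with a surjection `φ` is an
injection of the finite set `Hom(G, Q)` into itself for every finite quotient `Q`, hence a bijection,
so every finite quotient map factors through `φ` and kills `ker φ`. Free groups are residually
finite because a reduced word of length `n` can be read as a path `n → n - 1 → ⋯ → 0` in
`Fin (n + 1)` along partial bijections, one for each generator, which extend to permutations.
-/

open Function Cardinal

universe u v

theorem Equiv.Perm.exists_forall_apply_eq_of_rel {α : Type*} [Finite α] (r : α → α → Prop)
    (hfun : ∀ a b b', r a b → r a b' → b = b') (hinj : ∀ a a' b, r a b → r a' b → a = a') :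
    ∃ σ : Equiv.Perm α, ∀ a b, r a b → σ a = b := by
  classical
  have := Fintype.ofFinite α
  let f a := if h : ∃ b, r a b then h.choose else a
  have hf : ∀ a b, r a b → f a = b := fun a b hab => by
    have h : ∃ b, r a b := ⟨b, hab⟩
    simp only [f, dif_pos h]
    exact hfun a _ _ h.choose_spec hab
  obtain ⟨g, hg⟩ := Set.MapsTo.exists_equiv_extend_of_card_eq (t := Finset.univ)
    (s := {a | ∃ b, r a b}) (f := f) Finset.card_univ.symm
    (fun _ _ => Finset.mem_coe.2 (Finset.mem_univ _))
    (fun a ⟨b, hab⟩ a' ⟨b', hab'⟩ h => hinj a a' b hab (by rwa [← hf a b hab, h, hf a' b' hab']))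
  exact ⟨g.trans (Equiv.subtypeUnivEquiv Finset.mem_univ),
    fun a b hab => (hg a ⟨b, hab⟩).trans (hf a b hab)⟩

instance MonoidHom.finite_of_fg (G H : Type*) [Group G] [Group H] [Group.FG G] [Finite H] :
    Finite (G →* H) := by
  obtain ⟨S, hS⟩ := Group.fg_def.mp ‹_›
  exact .of_injective (fun f : G →* H => fun s : S => f s)
    fun f g hfg => MonoidHom.eq_of_eqOn_dense hS fun s hs => congr_fun hfg ⟨s, hs⟩

theorem MonoidHom.injective_of_surjective_of_residuallyFinite {G : Type*} [Group G] [Group.FG G]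
    [Group.ResiduallyFinite G] (φ : G →* G) (hφ : Surjective φ) : Injective φ := by
  rw [injective_iff_map_eq_one]
  intro g hg
  by_contra hne
  obtain ⟨K, hK⟩ := Group.exists_finiteIndexNormalSubgroup_notMem g hne
  have hcomp : Injective fun ψ : G →* G ⧸ K.toSubgroup => ψ.comp φ :=
    fun ψ ψ' h => MonoidHom.ext fun x => by
      obtain ⟨y, rfl⟩ := hφ x
      exact DFunLike.congr_fun h y
  obtain ⟨ψ, hψ⟩ := Finite.injective_iff_surjective.mp hcomp (QuotientGroup.mk' K.toSubgroup)
  apply hK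
  rw [← FiniteIndexNormalSubgroup.mem_toSubgroup_iff, ← QuotientGroup.eq_one_iff]
  exact (DFunLike.congr_fun hψ g).symm.trans (by simp [hg])

theorem Abelianization.map_surjective {G H : Type*} [Group G] [Group H] {f : G →* H}
    (hf : Surjective f) : Surjective (Abelianization.map f) := by
  intro y
  obtain ⟨x, rfl⟩ := QuotientGroup.mk_surjective y
  obtain ⟨g, rfl⟩ := hf x
  exact ⟨of g, map_of f g⟩

namespace FreeGroup

theorem lift_mk_le_lift_mk_of_surjective {α : Type u} {β : Type v}
    {f : FreeGroup β →* FreeGroup α} (hf : Surjective f) :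
    Cardinal.lift.{v} #α ≤ Cardinal.lift.{u} #β := by
  let g : FreeAbelianGroup β →+ FreeAbelianGroup α := (Abelianization.map f).toAdditive
  have hg : Surjective g.toIntLinearMap := Abelianization.map_surjective hf
  have := g.toIntLinearMap.lift_rank_le_of_surjective hg
  rwa [← (FreeAbelianGroup.basis α).mk_eq_rank'', ← (FreeAbelianGroup.basis β).mk_eq_rank''] at this

variable {α : Type*}

/-- A letter `L[k] = (x, b)` of `L` asks the permutation attached to `x` to move `k + 1` to `k`
if `b` is true and `k` to `k + 1` if `b` is false, so that the word `L`, acting from the right,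
walks from `Fin.last L.length` down to `0`. -/
def Traverses (L : List (α × Bool)) (x : α) (i j : Fin (L.length + 1)) : Prop :=
  ∃ k : Fin L.length, (L[k] = (x, true) ∧ i = k.succ ∧ j = k.castSucc) ∨
    (L[k] = (x, false) ∧ i = k.castSucc ∧ j = k.succ)

theorem IsReduced.not_adjacent_inverse {L : List (α × Bool)} (hL : IsReduced L)
    {k k' : Fin L.length} (hk : k'.val = k.val + 1) {x : α} {b : Bool} (h : L[k] = (x, b))
    (h' : L[k'] = (x, !b)) : False := by
  have := List.isChain_iff_getElem.mp hL k (by omega)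
  simp only [Fin.getElem_fin] at h h'
  simp only [show k.val + 1 = k'.val from hk.symm, h, h'] at this
  cases b <;> simp at this

theorem Traverses.functional {L : List (α × Bool)} (hL : IsReduced L) {x : α}
    {i j j' : Fin (L.length + 1)} (h : Traverses L x i j) (h' : Traverses L x i j') : j = j' := by
  obtain ⟨k, ⟨hk, rfl, rfl⟩ | ⟨hk, rfl, rfl⟩⟩ := h <;>
  obtain ⟨k', ⟨hk', hi, rfl⟩ | ⟨hk', hi, rfl⟩⟩ := h'
  all_goals simp only [Fin.ext_iff, Fin.val_succ, Fin.val_castSucc] at hi ⊢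
  · omega
  · exact (hL.not_adjacent_inverse (k := k) (k' := k') (by omega) hk hk').elim
  · exact (hL.not_adjacent_inverse (k := k') (k' := k) (by omega) hk' hk).elim
  · omega

theorem Traverses.injective {L : List (α × Bool)} (hL : IsReduced L) {x : α}
    {i i' j : Fin (L.length + 1)} (h : Traverses L x i j) (h' : Traverses L x i' j) : i = i' := by
  obtain ⟨k, ⟨hk, rfl, rfl⟩ | ⟨hk, rfl, rfl⟩⟩ := h <;>
  obtain ⟨k', ⟨hk', rfl, hj⟩ | ⟨hk', rfl, hj⟩⟩ := h'
  all_goals simp only [Fin.ext_iff, Fin.val_succ, Fin.val_castSucc] at hj ⊢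
  · omega
  · exact (hL.not_adjacent_inverse (k := k') (k' := k) (by omega) hk' hk).elim
  · exact (hL.not_adjacent_inverse (k := k) (k' := k') (by omega) hk hk').elim
  · omega

theorem val_lift_mk_apply_last_of_append_eq {L : List (α × Bool)}
    (σ : α → Equiv.Perm (Fin (L.length + 1))) (hσ : ∀ x i j, Traverses L x i j → σ x i = j) :
    ∀ L₁ L₂, L₁ ++ L₂ = L → (lift σ (mk L₂) (Fin.last _) : ℕ) = L₁.length := by
  intro L₁ L₂
  induction L₂ generalizing L₁ with
  | nil => rintro rfl; simp
  | cons a L₂ ih =>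
    intro hL
    have hprev := ih (L₁ ++ [a]) (by simpa using hL)
    have hlen : L₁.length < L.length := by rw [← hL]; simp
    set k : Fin L.length := ⟨L₁.length, hlen⟩
    have hk : L[k] = a := by simp [k, ← hL]
    obtain ⟨x, b⟩ := a
    rw [lift_mk] at hprev ⊢
    simp only [List.map_cons, List.prod_cons, Equiv.Perm.mul_apply]
    have hsucc : (List.map (fun x => bif x.2 then σ x.1 else (σ x.1)⁻¹) L₂).prod (Fin.last _)
        = k.succ := Fin.ext (by simpa using hprev)
    rw [hsucc]
    cases b <;> simp only [cond_false, cond_true]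
    · rw [show (σ x)⁻¹ k.succ = k.castSucc from
        (Equiv.Perm.inv_eq_iff_eq).2 (hσ x _ _ ⟨k, .inr ⟨hk, rfl, rfl⟩⟩).symm]
      rfl
    · rw [show σ x k.succ = k.castSucc from hσ x _ _ ⟨k, .inl ⟨hk, rfl, rfl⟩⟩]
      rfl

theorem IsReduced.exists_perm_lift_mk_apply_last_eq_zero {L : List (α × Bool)}
    (hL : IsReduced L) :
    ∃ σ : α → Equiv.Perm (Fin (L.length + 1)), lift σ (mk L) (Fin.last _) = 0 := by
  choose σ hσ using fun x => Equiv.Perm.exists_forall_apply_eq_of_rel (Traverses L x)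
    (fun _ _ _ => Traverses.functional hL) (fun _ _ _ => Traverses.injective hL)
  exact ⟨σ, Fin.ext (val_lift_mk_apply_last_of_append_eq σ hσ [] L rfl)⟩

instance : Group.ResiduallyFinite (FreeGroup α) := by
  classical
  refine Group.residuallyFinite_of_forall_exists_finite_monoidHom fun w hw => ?_
  obtain ⟨σ, hσ⟩ := (isReduced_toWord (x := w)).exists_perm_lift_mk_apply_last_eq_zero
  refine ⟨_, inferInstance, inferInstance, lift σ, fun h => hw ?_⟩
  rwa [mk_toWord, h, Equiv.Perm.one_apply, Fin.last_eq_zero_iff, List.length_eq_zero_iff,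
    toWord_eq_nil_iff] at hσ

theorem injective_of_surjective_of_equiv {β : Type*} [Finite α] (e : β ≃ α)
    {f : FreeGroup β →* FreeGroup α} (hf : Surjective f) : Injective f := by
  let E := freeGroupCongr e
  have := (f.comp E.symm.toMonoidHom).injective_of_surjective_of_residuallyFinite
    (hf.comp E.symm.surjective)
  simpa [comp_def] using this.comp E.injective

end FreeGroup

/-- A free group of rank `N` cannot be generated by fewer than `N` elements, and any
generating set consisting of exactly `N` elements is a free basis (i.e. the induced map
from the free group on that set is an isomorphism). -/
theorem free_group_generators (N : ℕ) :
    (∀ T : Finset (FreeGroup (Fin N)),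
        Subgroup.closure (T : Set (FreeGroup (Fin N))) = ⊤ → N ≤ T.card) ∧
    (∀ S : Finset (FreeGroup (Fin N)),
        Subgroup.closure (S : Set (FreeGroup (Fin N))) = ⊤ → S.card = N →
          Function.Bijective
            (FreeGroup.lift (fun s : (S : Set (FreeGroup (Fin N))) =>
              (s : FreeGroup (Fin N))))) := by
  have lift_surjective {T : Set (FreeGroup (Fin N))} (hT : Subgroup.closure T = ⊤) :
      Surjective (FreeGroup.lift ((↑) : T → FreeGroup (Fin N))) :=
    MonoidHom.range_eq_top.mp (by rw [← FreeGroup.closure_eq_range, hT])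
  refine ⟨fun T hT => ?_, fun S hS hcard => ?_⟩
  · simpa using FreeGroup.lift_mk_le_lift_mk_of_surjective (lift_surjective hT)
  · exact ⟨FreeGroup.injective_of_surjective_of_equiv (S.equivFinOfCardEq hcard)
      (lift_surjective hS), lift_surjective hS⟩
end

section
/- A graph is chordal (every cycle of length at least 4 has a chord) if and only if its vertices admit a perfect elimination ordering, i.e. an ordering such that for each vertex i, the neighbours of i that precede i in the ordering form a clique. -/
/-!
A ranking in which every vertex's lower-ranked neighbours form a clique gives chordality directly:
on a cycle of length at least 4, the two cycle-neighbours of the highest-ranked vertex are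
adjacent, and that edge is a chord.

Conversely, a simplicial vertex (one whose neighbourhood is a clique) can be ranked last, and
chordality passes to induced subgraphs, so it suffices that every nonempty chordal graph has a
simplicial vertex. Given nonadjacent `a` and `b`, let `C` be the set of vertices reachable from `b`
outside the closed neighbourhood of `a`, and `S` the neighbours of `a` adjacent to `C`. Two
nonadjacent vertices of `S` would be joined through `C` by a shortest path which, closed up through
`a`, is a chordless cycle of length at least 4; so `S` is a clique. By induction the smaller graph
induced on `C ∪ S` has a simplicial vertex outside the clique `S`, i.e. in `C`; all its neighbours
lie in `C ∪ S`, so it is simplicial in the whole graph and not adjacent to `a`.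
-/

/-- A graph is chordal if every cycle with at least 4 vertices has a chord: an edge of the
graph joining two vertices of the cycle that are not adjacent in the cycle. -/
def IsChordal {V : Type*} (Γ : SimpleGraph V) : Prop :=
  ∀ (v : V) (c : Γ.Walk v v), c.IsCycle → 4 ≤ c.length →
    ∃ u w : V, u ∈ c.support ∧ w ∈ c.support ∧ Γ.Adj u w ∧ s(u, w) ∉ c.edges

/-- An ordering of the vertices (given by a bijection with `Fin (card V)`) is a perfect
elimination ordering if for each vertex `i` the lesser neighbours of `i` form a clique. -/
def IsPerfectEliminationOrdering {V : Type*} [Fintype V] (Γ : SimpleGraph V)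
    (f : V ≃ Fin (Fintype.card V)) : Prop :=
  ∀ i u w : V, Γ.Adj i u → Γ.Adj i w → f u < f i → f w < f i → u ≠ w → Γ.Adj u w

namespace SimpleGraph

variable {V : Type*} {G : SimpleGraph V}

namespace Walk

lemma exists_isPath_forall_length_le {Y : Set V} {s t : V} (p : G.Walk s t)
    (hp : ∀ z ∈ p.support, z ∈ Y) :
    ∃ q : G.Walk s t, q.IsPath ∧ (∀ z ∈ q.support, z ∈ Y) ∧
      ∀ q' : G.Walk s t, (∀ z ∈ q'.support, z ∈ Y) → q.length ≤ q'.length := by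
  classical
  obtain ⟨q, hqY, hmin⟩ := (measure fun q : G.Walk s t => q.length).wf.has_min
    {q | ∀ z ∈ q.support, z ∈ Y} ⟨p, hp⟩
  exact ⟨q.bypass, q.bypass_isPath, fun z hz => hqY z (q.support_bypass_subset_support hz),
    fun q' hq' => q.length_bypass_le_length.trans (not_lt.1 (hmin q' hq'))⟩

lemma mem_edges_of_forall_length_le {Y : Set V} {s t u w : V} {q : G.Walk s t}
    (hqY : ∀ z ∈ q.support, z ∈ Y)
    (hmin : ∀ q' : G.Walk s t, (∀ z ∈ q'.support, z ∈ Y) → q.length ≤ q'.length)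
    (hu : u ∈ q.support) (hw : w ∈ q.support) (huw : G.Adj u w) : s(u, w) ∈ q.edges := by
  classical
  induction q with
  | nil =>
    simp only [support_nil, List.mem_singleton] at hu hw
    exact absurd (hu.trans hw.symm) huw.ne
  | @cons s s₁ t h q ih =>
    have hqY' : ∀ z ∈ q.support, z ∈ Y := fun z hz => hqY z (List.mem_cons_of_mem _ hz)
    have hmin' : ∀ q' : G.Walk s₁ t, (∀ z ∈ q'.support, z ∈ Y) → q.length ≤ q'.length :=
      fun q' hq' => by simpa using hmin (cons h q') (by simpa [hqY s (by simp)] using hq')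
    -- a neighbour of `s` further along `q` would give a shortcut
    have hsnd : ∀ x (hx : x ∈ q.support), G.Adj s x → x = s₁ := by
      intro x hx hsx
      have hlen := hmin (cons hsx (q.dropUntil x hx)) (by
        simp only [support_cons, List.mem_cons, forall_eq_or_imp]
        exact ⟨hqY s (by simp), fun z hz => hqY' z (q.support_dropUntil_subset_support hx hz)⟩)
      have hsplit := congrArg length (q.take_spec hx)
      simp only [length_cons, length_append] at hlen hsplit
      exact (eq_of_length_eq_zero (p := q.takeUntil x hx) (by omega)).symm
    simp only [support_cons, List.mem_cons] at hu hw
    rcases hu with rfl | hu <;> rcases hw with rfl | hw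
    · exact absurd rfl huw.ne
    · simp [hsnd w hw huw]
    · simp [hsnd u hu huw.symm]
    · exact List.mem_cons_of_mem _ (ih hqY' hmin' hu hw)

lemma IsPath.isCycle_cons_concat {a s t : V} {q : G.Walk s t} (hq : q.IsPath)
    (ha : a ∉ q.support) (hst : s ≠ t) (has : G.Adj a s) (hta : G.Adj t a) :
    (cons has (q.concat hta)).IsCycle := by
  refine (cons_isCycle_iff _ _).2 ⟨hq.concat ha _, ?_⟩
  rw [edges_concat, List.concat_eq_append, List.mem_append, List.mem_singleton, Sym2.eq_iff]
  rintro (h | ⟨rfl, rfl⟩ | ⟨-, rfl⟩)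
  · exact ha (q.fst_mem_support_of_mem_edges h)
  all_goals exact hst rfl

lemma IsCycle.snd_penultimate_notMem_edges {v : V} {c : G.Walk v v} (hc : c.IsCycle)
    (hlen : 4 ≤ c.length) : s(c.snd, c.penultimate) ∉ c.edges := by
  intro h
  rw [← mem_edges_toSubgraph, Subgraph.mem_edgeSet, ← Subgraph.mem_neighborSet,
    snd, hc.neighborSet_toSubgraph_internal one_ne_zero (by omega)] at h
  rcases h with h | h
  · exact (adj_penultimate hc.not_nil).ne (h.trans c.getVert_zero)
  · have := hc.getVert_injOn (by simp; omega) (by simp; omega) h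
    omega

end Walk

def IsSimplicial (G : SimpleGraph V) (v : V) : Prop := G.IsClique (G.neighborSet v)

lemma IsSimplicial.of_induce {W : Set V} {v : W} (hN : G.neighborSet v ⊆ W)
    (h : (G.induce W).IsSimplicial v) : G.IsSimplicial v := by
  intro u hu w hw huw
  exact h (show (G.induce W).Adj v ⟨u, hN hu⟩ from hu) (show (G.induce W).Adj v ⟨w, hN hw⟩ from hw)
    fun e => huw (congrArg Subtype.val e)

lemma exists_isSimplicial_notMem_of_isClique
    (hG : ∀ a b, a ≠ b → ¬G.Adj a b → ∃ v, G.IsSimplicial v ∧ v ≠ a ∧ ¬G.Adj a v)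
    {S : Set V} (hS : G.IsClique S) {x : V} (hx : x ∉ S) : ∃ v ∉ S, G.IsSimplicial v := by
  by_cases hcomplete : ∀ u w, u ≠ w → G.Adj u w
  · exact ⟨x, hx, fun u _ w _ huw => hcomplete u w huw⟩
  push Not at hcomplete
  obtain ⟨a, b, hab, hnadj, hSa⟩ : ∃ a b, a ≠ b ∧ ¬G.Adj a b ∧ ∀ s ∈ S, s = a ∨ G.Adj a s := by
    by_cases hS' : ∃ a ∈ S, ∃ b, a ≠ b ∧ ¬G.Adj a b
    · obtain ⟨a, ha, b, hab, hnadj⟩ := hS'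
      exact ⟨a, b, hab, hnadj, fun s hs => (eq_or_ne s a).imp_right fun hsa => hS ha hs hsa.symm⟩
    · push Not at hS'
      obtain ⟨a, b, hab, hnadj⟩ := hcomplete
      exact ⟨a, b, hab, hnadj, fun s hs => (eq_or_ne s a).imp_right fun hsa =>
        (hS' s hs a hsa).symm⟩
  obtain ⟨v, hv, hva, hav⟩ := hG a b hab hnadj
  exact ⟨v, fun hvS => (hSa v hvS).elim hva hav, hv⟩

def reachableWithin (G : SimpleGraph V) (X : Set V) (b : V) : Set V :=
  {z | ∃ p : G.Walk b z, ∀ y ∈ p.support, y ∈ X}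

variable {X : Set V} {b y z : V}

lemma reachableWithin_subset : G.reachableWithin X b ⊆ X :=
  fun _ ⟨p, hp⟩ => hp _ p.end_mem_support

lemma mem_reachableWithin_self (hb : b ∈ X) : b ∈ G.reachableWithin X b :=
  ⟨.nil, by simpa⟩

lemma mem_reachableWithin_of_adj (hy : y ∈ G.reachableWithin X b) (h : G.Adj y z)
    (hz : z ∈ X) : z ∈ G.reachableWithin X b := by
  obtain ⟨p, hp⟩ := hy
  refine ⟨p.concat h, fun x hx => ?_⟩
  rw [Walk.support_concat, List.mem_append, List.mem_singleton] at hx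
  exact hx.elim (hp x) (· ▸ hz)

lemma exists_walk_of_mem_reachableWithin (hy : y ∈ G.reachableWithin X b)
    (hz : z ∈ G.reachableWithin X b) : ∃ p : G.Walk y z, ∀ x ∈ p.support, x ∈ X := by
  obtain ⟨p, hp⟩ := hy
  obtain ⟨q, hq⟩ := hz
  refine ⟨p.reverse.append q, fun x hx => ?_⟩
  rw [Walk.mem_support_append_iff, Walk.support_reverse, List.mem_reverse] at hx
  exact hx.elim (hp x) (hq x)

end SimpleGraph

open SimpleGraph

section

variable {V : Type*} {Γ : SimpleGraph V}

def IsPerfectEliminationRanking {α : Type*} [LT α] (Γ : SimpleGraph V) (r : V → α) : Prop :=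
  ∀ i u w : V, Γ.Adj i u → Γ.Adj i w → r u < r i → r w < r i → u ≠ w → Γ.Adj u w

theorem IsPerfectEliminationRanking.isChordal {α : Type*} [LinearOrder α] {r : V → α}
    (hr : Function.Injective r) (h : IsPerfectEliminationRanking Γ r) : IsChordal Γ := by
  classical
  intro v c hc hlen
  obtain ⟨m, hm, hmax⟩ := c.support.toFinset.exists_max_image r ⟨v, by simp⟩
  rw [List.mem_toFinset] at hm
  set c' := c.rotate m hm
  have hc' : c'.IsCycle := hc.rotate hm
  have hlen' : 4 ≤ c'.length := by simpa [c'] using hlen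
  have hsupp : ∀ x, x ∈ c'.support ↔ x ∈ c.support := fun x => c.mem_support_rotate_iff m hm
  have hearlier : ∀ x ∈ c'.support, x ≠ m → r x < r m := fun x hx hxm =>
    (hmax x (by simpa [hsupp] using hx)).lt_of_ne (hr.ne hxm)
  have hm_snd : Γ.Adj m c'.snd := Walk.adj_snd hc'.not_nil
  have hm_pen : Γ.Adj m c'.penultimate := (Walk.adj_penultimate hc'.not_nil).symm
  have hsnd : c'.snd ∈ c'.support := c'.getVert_mem_support 1
  have hpen : c'.penultimate ∈ c'.support := c'.getVert_mem_support _
  refine ⟨c'.snd, c'.penultimate, (hsupp _).1 hsnd, (hsupp _).1 hpen,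
    h m _ _ hm_snd hm_pen (hearlier _ hsnd hm_snd.ne') (hearlier _ hpen hm_pen.ne')
      hc'.snd_ne_penultimate, fun he => ?_⟩
  exact hc'.snd_penultimate_notMem_edges hlen' ((c.rotate_edges m hm).mem_iff.2 he)

theorem IsPerfectEliminationRanking.of_isSimplicial {α : Type*} [Preorder α] {r : V → α} {v : V}
    (hv : Γ.IsSimplicial v) (hmax : ∀ x, x ≠ v → r x < r v)
    (h : IsPerfectEliminationRanking (Γ.induce {x | x ≠ v}) fun x => r x) :
    IsPerfectEliminationRanking Γ r := by
  intro i u w hiu hiw hu hw huw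
  by_cases hi : i = v
  · subst hi
    exact hv hiu hiw huw
  have hne : ∀ x, r x < r i → x ≠ v := fun x hx hxv => (hxv ▸ hx).not_gt (hmax i hi)
  exact h ⟨i, hi⟩ ⟨u, hne u hu⟩ ⟨w, hne w hw⟩ hiu hiw hu hw fun e => huw (congrArg Subtype.val e)

theorem IsChordal.induce (hΓ : IsChordal Γ) (W : Set V) : IsChordal (Γ.induce W) := by
  intro v c hc hlen
  obtain ⟨u, w, hu, hw, huw, hnot⟩ := hΓ _ (c.map (Embedding.induce W).toHom)
    ((Walk.isCycle_map_iff_of_injective Subtype.val_injective).2 hc) (by rwa [Walk.length_map])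
  rw [Walk.support_map, List.mem_map] at hu hw
  obtain ⟨u, hu, rfl⟩ := hu
  obtain ⟨w, hw, rfl⟩ := hw
  refine ⟨u, w, hu, hw, huw, fun h => hnot ?_⟩
  rw [Walk.edges_map]
  exact List.mem_map_of_mem h

theorem IsChordal.adj_of_walk_outside_neighborhood (hΓ : IsChordal Γ) {a s t : V}
    (has : Γ.Adj a s) (hat : Γ.Adj a t) (hst : s ≠ t) (p : Γ.Walk s t)
    (hp : ∀ z ∈ p.support, z = s ∨ z = t ∨ (z ≠ a ∧ ¬Γ.Adj a z)) : Γ.Adj s t := by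
  by_contra hnadj
  obtain ⟨q, hq, hqY, hmin⟩ :=
    p.exists_isPath_forall_length_le (Y := {z | z = s ∨ z = t ∨ (z ≠ a ∧ ¬Γ.Adj a z)}) hp
  have ha : a ∉ q.support := fun h => by
    rcases hqY a h with h | h | h
    exacts [has.ne h, hat.ne h, h.1 rfl]
  have hlen : 2 ≤ q.length := by
    by_contra! h
    interval_cases hl : q.length
    exacts [hst (Walk.eq_of_length_eq_zero hl), hnadj (Walk.adj_of_length_eq_one hl)]
  set c : Γ.Walk a a := .cons has (q.concat hat.symm)
  obtain ⟨u, w, hu, hw, huw, hnot⟩ :=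
    hΓ a c (hq.isCycle_cons_concat ha hst has hat.symm) (by simp [c]; omega)
  have hsupp : ∀ x ∈ c.support, x = a ∨ x ∈ q.support := by
    intro x hx
    simpa [c, Walk.support_concat, or_comm, or_left_comm] using hx
  have hspoke : ∀ x ∈ c.support, Γ.Adj a x → s(a, x) ∈ c.edges := by
    intro x hx hax
    rcases hsupp x hx with rfl | hx
    · exact absurd rfl hax.ne
    rcases hqY x hx with rfl | rfl | hx
    · simp [c]
    · simp [c, Walk.edges_concat, Sym2.eq_swap]
    · exact absurd hax hx.2
  rcases hsupp u hu with rfl | hu'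
  · exact hnot (hspoke w hw huw)
  rcases hsupp w hw with rfl | hw'
  · exact hnot (Sym2.eq_swap ▸ hspoke u hu huw.symm)
  exact hnot (by simp [c, Walk.edges_concat, q.mem_edges_of_forall_length_le hqY hmin hu' hw' huw])

theorem IsChordal.isClique_adj_reachableWithin (hΓ : IsChordal Γ) (a b : V) :
    Γ.IsClique {s | Γ.Adj a s ∧
      ∃ c ∈ Γ.reachableWithin {z | z ≠ a ∧ ¬Γ.Adj a z} b, Γ.Adj c s} := by
  rintro s ⟨has, c₁, hc₁, hs⟩ t ⟨hat, c₂, hc₂, ht⟩ hst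
  obtain ⟨r, hr⟩ := exists_walk_of_mem_reachableWithin hc₁ hc₂
  refine hΓ.adj_of_walk_outside_neighborhood has hat hst (.cons hs.symm (r.concat ht)) ?_
  intro z hz
  rw [Walk.support_cons, Walk.support_concat, List.mem_cons, List.mem_append,
    List.mem_singleton] at hz
  rcases hz with h | h | h
  exacts [Or.inl h, Or.inr (Or.inr (hr z h)), Or.inr (Or.inl h)]

theorem IsChordal.exists_isSimplicial_not_adj [Finite V] (hΓ : IsChordal Γ) {a b : V}
    (hab : a ≠ b) (hnadj : ¬Γ.Adj a b) : ∃ v, Γ.IsSimplicial v ∧ v ≠ a ∧ ¬Γ.Adj a v := by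
  induction hn : Nat.card V using Nat.strong_induction_on generalizing V with
  | _ n ih =>
  set X : Set V := {z | z ≠ a ∧ ¬Γ.Adj a z}
  set C := Γ.reachableWithin X b
  set S : Set V := {s | Γ.Adj a s ∧ ∃ c ∈ C, Γ.Adj c s}
  have hCX : C ⊆ X := reachableWithin_subset
  have hN : ∀ v ∈ C, Γ.neighborSet v ⊆ C ∪ S := by
    intro v hv y hy
    by_cases hyX : y ∈ X
    · exact Or.inl (mem_reachableWithin_of_adj hv hy hyX)
    · simp only [X, Set.mem_ofPred_eq, not_and, not_not] at hyX
      exact Or.inr ⟨hyX fun hya => (hCX hv).2 (hya ▸ hy.symm), v, hv, hy⟩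
  have hcard : Nat.card ↥(C ∪ S) < n := hn ▸ Finite.card_subtype_lt (x := a)
    fun h => h.elim (fun h => (hCX h).1 rfl) (fun h => h.1.ne rfl)
  obtain ⟨⟨v, hvW⟩, hvS, hv⟩ := exists_isSimplicial_notMem_of_isClique
    (fun a' b' h h' => ih _ hcard (hΓ.induce (C ∪ S)) h h' rfl)
    (S := Subtype.val ⁻¹' S)
    (isClique_induce_iff.2 ((hΓ.isClique_adj_reachableWithin a b).subset
      (Set.image_preimage_subset _ _)))
    (x := ⟨b, Or.inl (mem_reachableWithin_self ⟨hab.symm, hnadj⟩)⟩) (fun h => hnadj h.1)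
  have hvC : v ∈ C := hvW.resolve_right hvS
  exact ⟨v, hv.of_induce (hN v hvC), (hCX hvC).1, (hCX hvC).2⟩

theorem IsChordal.exists_isSimplicial [Finite V] [Nonempty V] (hΓ : IsChordal Γ) :
    ∃ v, Γ.IsSimplicial v :=
  let ⟨v, _, hv⟩ := exists_isSimplicial_notMem_of_isClique
    (fun _ _ h h' => hΓ.exists_isSimplicial_not_adj h h') isClique_empty
    (Set.notMem_empty (Classical.arbitrary V))
  ⟨v, hv⟩

theorem IsChordal.exists_perfectEliminationRanking [Finite V] (hΓ : IsChordal Γ) {n : ℕ}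
    (hn : Nat.card V = n) : ∃ f : V ≃ Fin n, IsPerfectEliminationRanking Γ f := by
  induction n generalizing V with
  | zero =>
    exact ⟨Finite.equivFinOfCardEq hn, fun i => (Finite.equivFinOfCardEq hn i).elim0⟩
  | succ n ih =>
    classical
    have : Nonempty V := (Nat.card_pos_iff.1 (by omega)).1
    obtain ⟨v, hv⟩ := hΓ.exists_isSimplicial
    let e : V ≃ Option {x // x ≠ v} := (Equiv.optionSubtypeNe v).symm
    have hcard : Nat.card {x // x ≠ v} = n := by
      have := (Nat.card_congr e).trans Finite.card_option
      omega
    obtain ⟨f, hf⟩ := ih (hΓ.induce {x | x ≠ v}) hcard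
    let g : V ≃ Fin (n + 1) := e.trans (f.optionCongr.trans finSuccEquivLast.symm)
    have hgv : g v = Fin.last n := by simp [g, e]
    have hg : ∀ x (hx : x ≠ v), g x = (f ⟨x, hx⟩).castSucc := fun x hx => by simp [g, e, hx]
    refine ⟨g, IsPerfectEliminationRanking.of_isSimplicial hv (fun x hx => ?_) ?_⟩
    · rw [hg x hx, hgv]
      exact Fin.castSucc_lt_last _
    · intro i u w hiu hiw hu hw huw
      beta_reduce at hu hw
      rw [hg _ i.2, hg _ u.2, Fin.castSucc_lt_castSucc_iff] at hu
      rw [hg _ i.2, hg _ w.2, Fin.castSucc_lt_castSucc_iff] at hw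
      exact hf i u w hiu hiw hu hw huw

end

theorem chordal_iff_perfect_elimination_ordering_general {V : Type*} [Fintype V]
    (Γ : SimpleGraph V) :
    IsChordal Γ ↔ ∃ f : V ≃ Fin (Fintype.card V), IsPerfectEliminationOrdering Γ f :=
  ⟨fun hΓ => hΓ.exists_perfectEliminationRanking Nat.card_eq_fintype_card,
    fun ⟨f, hf⟩ => IsPerfectEliminationRanking.isChordal f.injective hf⟩

/-- Fulkerson--Gross: a finite graph is chordal if and only if it admits a perfect
elimination ordering. -/
theorem chordal_iff_perfect_elimination_ordering {V : Type*} [Fintype V] [DecidableEq V]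
    (Γ : SimpleGraph V) :
    IsChordal Γ ↔ ∃ f : V ≃ Fin (Fintype.card V), IsPerfectEliminationOrdering Γ f :=
  chordal_iff_perfect_elimination_ordering_general Γ
end

section
/- A subgroup of a free group is free; in particular, if the fundamental group of a closed orientable surface of positive genus embedded as a subgroup of some group G is not free, then G cannot be free. Concretely: the fundamental group of a closed orientable surface of genus g ≥ 1 is not a free group. -/
/-!
A free group `F` with basis `ι` satisfies `(F →* K) ≃ (ι → K)`, so the number of homomorphisms
from `F` to a group `K` depends only on the cardinality of `K`. Homomorphisms from the genus-`g`
surface group to `K` are the `2g`-tuples satisfying the relator: all `|K| ^ (2g)` tuples when `K`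
is abelian, but strictly fewer when `K` has a noncommuting pair `c, d` (send `a₁ ↦ c`, `b₁ ↦ d` and
the other generators to `1`). Comparing `ℤ/6` with `S₃`, both of order `6`, shows that the surface
group of positive genus is not free. That subgroups of free groups are free is Nielsen–Schreier.
-/

/-- The single defining relation of the genus-`g` surface group:
`(a₁,b₁)(a₂,b₂)⋯(a_g,b_g)` in the free group on `2g` generators, where
`(a,b) = a⁻¹b⁻¹ab`, `aᵢ` is the `2i`-th generator and `bᵢ` the `(2i+1)`-st. -/
def surfaceRel (g : ℕ) : FreeGroup (Fin (2 * g)) :=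
  ((List.finRange g).map fun (i : Fin g) =>
    letI a : FreeGroup (Fin (2 * g)) := FreeGroup.of ⟨2 * i, by have := i.isLt; omega⟩
    letI b : FreeGroup (Fin (2 * g)) := FreeGroup.of ⟨2 * i + 1, by have := i.isLt; omega⟩
    a⁻¹ * b⁻¹ * a * b).prod

/-- The fundamental group of the closed orientable surface of genus `g`:
generators `a₁,b₁,…,a_g,b_g` and the single relation `(a₁,b₁)⋯(a_g,b_g) = 1`. -/
def SurfaceGroup (g : ℕ) : Type :=
  PresentedGroup {r : FreeGroup (Fin (2 * g)) | r = surfaceRel g}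

instance (g : ℕ) : Group (SurfaceGroup g) :=
  inferInstanceAs (Group (PresentedGroup _))

namespace PresentedGroup

variable {α G : Type*} [Group G] {rels : Set (FreeGroup α)}

theorem lift_comp_of (φ : PresentedGroup rels →* G) :
    FreeGroup.lift (φ ∘ of) = φ.comp (mk rels) :=
  FreeGroup.ext_hom _ _ fun _ => FreeGroup.lift_apply_of.trans rfl

def homEquiv :
    (PresentedGroup rels →* G) ≃ {f : α → G // ∀ r ∈ rels, FreeGroup.lift f r = 1} where
  toFun φ := ⟨φ ∘ of, fun r hr => by
    rw [lift_comp_of, MonoidHom.comp_apply, one_of_mem hr, map_one]⟩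
  invFun f := toGroup f.2
  left_inv φ := ext fun _ => toGroup.of _
  right_inv f := Subtype.ext <| funext fun _ => toGroup.of _

end PresentedGroup

theorem IsFreeGroup.card_monoidHom_congr (G : Type*) {K K' : Type*} [Group G] [IsFreeGroup G]
    [Group K] [Group K'] (e : K ≃ K') : Nat.card (G →* K) = Nat.card (G →* K') := by
  obtain ⟨ι, ⟨b⟩⟩ := IsFreeGroup.nonempty_basis (G := G)
  exact Nat.card_congr (b.lift.symm.trans ((Equiv.arrowCongr (.refl ι) e).trans b.lift))

namespace SurfaceGroup

variable {g : ℕ} {K : Type*} [Group K]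

def homEquiv :
    (SurfaceGroup g →* K) ≃ {f : Fin (2 * g) → K // FreeGroup.lift f (surfaceRel g) = 1} :=
  PresentedGroup.homEquiv.trans (Equiv.subtypeEquivRight fun _ => forall_eq)

theorem lift_surfaceRel (f : Fin (2 * g) → K) :
    FreeGroup.lift f (surfaceRel g) = ((List.finRange g).map fun i : Fin g =>
      (f ⟨2 * i, by omega⟩)⁻¹ * (f ⟨2 * i + 1, by omega⟩)⁻¹ * f ⟨2 * i, by omega⟩ *
        f ⟨2 * i + 1, by omega⟩).prod := by
  simp [surfaceRel, map_list_prod, List.map_map, Function.comp_def]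

theorem lift_surfaceRel_eq_one {A : Type*} [CommGroup A] (f : Fin (2 * g) → A) :
    FreeGroup.lift f (surfaceRel g) = 1 := by
  rw [lift_surfaceRel]
  refine List.prod_eq_one fun x hx => ?_
  obtain ⟨i, -, rfl⟩ := List.mem_map.1 hx
  rw [mul_right_comm (f _)⁻¹, inv_mul_cancel, one_mul, inv_mul_cancel]

theorem lift_surfaceRel_succ (c d : K) :
    FreeGroup.lift (fun j : Fin (2 * (g + 1)) =>
        if j.val = 0 then c else if j.val = 1 then d else 1) (surfaceRel (g + 1)) =
      c⁻¹ * d⁻¹ * c * d := by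
  rw [lift_surfaceRel, List.finRange_succ, List.map_cons, List.prod_cons, List.map_map]
  refine (congrArg₂ (· * ·) (by simp) (List.prod_eq_one fun x hx => ?_)).trans (mul_one _)
  obtain ⟨i, -, rfl⟩ := List.mem_map.1 hx
  simp

theorem card_monoidHom_of_commGroup {A : Type*} [CommGroup A] :
    Nat.card (SurfaceGroup g →* A) = Nat.card A ^ (2 * g) := by
  rw [Nat.card_congr (homEquiv.trans (Equiv.subtypeUnivEquiv lift_surfaceRel_eq_one)), Nat.card_fun,
    Nat.card_fin]

theorem card_monoidHom_lt [Finite K] (hg : 1 ≤ g) {c d : K} (hcd : ¬Commute c d) :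
    Nat.card (SurfaceGroup g →* K) < Nat.card K ^ (2 * g) := by
  obtain ⟨g, rfl⟩ : ∃ g', g = g' + 1 := ⟨g - 1, by omega⟩
  have hrel : FreeGroup.lift (fun j : Fin (2 * (g + 1)) =>
      if j.val = 0 then c else if j.val = 1 then d else 1) (surfaceRel (g + 1)) ≠ 1 := by
    rw [lift_surfaceRel_succ, mul_assoc, ← mul_inv_rev, Ne, inv_mul_eq_one]
    exact fun h => hcd h.symm
  calc Nat.card (SurfaceGroup (g + 1) →* K)
      _ = Nat.card {f : Fin (2 * (g + 1)) → K // FreeGroup.lift f (surfaceRel (g + 1)) = 1} :=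
        Nat.card_congr homEquiv
      _ < Nat.card (Fin (2 * (g + 1)) → K) := Finite.card_subtype_lt hrel
      _ = Nat.card K ^ (2 * (g + 1)) := by rw [Nat.card_fun, Nat.card_fin]

end SurfaceGroup

/-- Every subgroup of a free group is free (Nielsen--Schreier); in contrast, the
fundamental group of a closed orientable surface of genus `g ≥ 1` is not a free group. -/
theorem surface_group_not_free :
    (∀ (ι : Type) (H : Subgroup (FreeGroup ι)), IsFreeGroup H) ∧
    (∀ g : ℕ, 1 ≤ g → ¬ IsFreeGroup (SurfaceGroup g)) := by
  refine ⟨fun ι H => inferInstance, fun g hg hfree => ?_⟩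
  let e : Multiplicative (ZMod 6) ≃ Equiv.Perm (Fin 3) := Fintype.equivOfCardEq (by decide)
  have hcard := IsFreeGroup.card_monoidHom_congr (SurfaceGroup g) e
  rw [SurfaceGroup.card_monoidHom_of_commGroup, Nat.card_congr e] at hcard
  have hlt := SurfaceGroup.card_monoidHom_lt hg (c := Equiv.swap (0 : Fin 3) 1)
    (d := Equiv.swap 0 2) (by simp only [Commute, SemiconjBy]; decide)
  exact hlt.ne hcard.symm
end
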